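/- arXiv:2405.12838 — 3 statements merged into one kernel-verified Lean document; each statement's English description precedes it below -/
import Mathlib

section
/- Let X be an integrable real random variable on a probability space with mean μ = 𝔼[X], let K > 0 and R ≥ 0 with |μ| ≤ R, and suppose ℙ[|X − μ| ≥ t] ≤ 2·exp(−t²/(2K²)) for all t ≥ 0. Let Δ ≥ K, L = −R − Δ and H = R + Δ. Then |𝔼[X] − 𝔼[X · 1_{L ≤ X ≤ H}]| ≤ 4·(2Δ + R) · exp(−Δ²/(2K²)). -/
open MeasureTheory Set Real

/-!
Since `|μ| ≤ R`, every `ω` with `X ω ∉ [L, H]` has `|X ω - μ| ≥ Δ`, so the truncation error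
`|∫_{X ∉ [L, H]} X|` is at most `∫_{|X - μ| ≥ Δ} |X - μ| + R ℙ(|X - μ| ≥ Δ)`. By the layer-cake
formula the integral is at most `Δ ℙ(|X - μ| ≥ Δ) + ∫_Δ^∞ ℙ(|X - μ| ≥ t) dt`, and bounding the
Gaussian by its tangent exponential at `Δ` gives `∫_Δ^∞ e^{-t²/2K²} dt ≤ (K²/Δ) e^{-Δ²/2K²}`,
where `K²/Δ ≤ Δ`.
-/

lemma integrable_exp_neg_sq_div {K : ℝ} (hK : K ≠ 0) :
    Integrable fun t : ℝ => exp (-t ^ 2 / (2 * K ^ 2)) := by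
  have hb : 0 < 1 / (2 * K ^ 2) := by positivity
  convert integrable_exp_neg_mul_sq hb using 3
  ring

lemma integral_exp_neg_sq_div_Ioi_le {K Δ : ℝ} (hK : K ≠ 0) (hΔ : 0 < Δ) :
    ∫ t in Ioi Δ, exp (-t ^ 2 / (2 * K ^ 2)) ≤ K ^ 2 / Δ * exp (-Δ ^ 2 / (2 * K ^ 2)) := by
  have ha : -(Δ / K ^ 2) < 0 := neg_neg_of_pos (by positivity)
  have htangent : ∀ t : ℝ, exp (-t ^ 2 / (2 * K ^ 2)) ≤
      exp (Δ ^ 2 / (2 * K ^ 2)) * exp (-(Δ / K ^ 2) * t) := by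
    intro t
    rw [← exp_add, exp_le_exp]
    have hsq : 0 ≤ (t - Δ) ^ 2 / (2 * K ^ 2) := by positivity
    have key : Δ ^ 2 / (2 * K ^ 2) + -(Δ / K ^ 2) * t - -t ^ 2 / (2 * K ^ 2)
        = (t - Δ) ^ 2 / (2 * K ^ 2) := by field_simp; ring
    linarith
  calc ∫ t in Ioi Δ, exp (-t ^ 2 / (2 * K ^ 2))
      ≤ ∫ t in Ioi Δ, exp (Δ ^ 2 / (2 * K ^ 2)) * exp (-(Δ / K ^ 2) * t) :=
        setIntegral_mono_on (integrable_exp_neg_sq_div hK).integrableOn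
          ((exp_neg_integrableOn_Ioi Δ (by positivity)).const_mul _) measurableSet_Ioi
          fun t _ => htangent t
    _ = K ^ 2 / Δ * exp (-Δ ^ 2 / (2 * K ^ 2)) := by
        rw [integral_const_mul, integral_exp_mul_Ioi ha, mul_div_assoc', mul_neg, ← exp_add]
        field_simp
        ring_nf

lemma le_abs_sub_of_notMem_Icc {x m R Δ : ℝ} (hm : |m| ≤ R) (hx : x ∉ Icc (-R - Δ) (R + Δ)) :
    Δ ≤ |x - m| := by
  obtain ⟨hm_ge, hm_le⟩ := abs_le.mp hm
  rcases not_and_or.mp hx with h | h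
  · exact le_abs.mpr (Or.inr (by linarith))
  · exact le_abs.mpr (Or.inl (by linarith))

section

variable {Ω : Type*} [MeasurableSpace Ω] {μ : Measure Ω}

lemma integral_sub_integral_mul_indicator_one {X : Ω → ℝ} (hX : Integrable X μ) {S : Set Ω}
    (hS : MeasurableSet S) :
    ∫ ω, X ω ∂μ - ∫ ω, X ω * S.indicator (fun _ => (1 : ℝ)) ω ∂μ = ∫ ω in Sᶜ, X ω ∂μ := by
  simp_rw [← indicator_mul_right, mul_one]
  rw [integral_indicator hS, ← integral_add_compl hS hX, add_sub_cancel_left]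

variable [IsFiniteMeasure μ]

lemma setIntegral_le_of_tail_le {Y : Ω → ℝ} (hYm : Measurable Y) (hYi : Integrable Y μ)
    (hY0 : 0 ≤ Y) {Δ : ℝ} (hΔ : 0 ≤ Δ) {g : ℝ → ℝ} (hg : IntegrableOn g (Ioi Δ))
    (htail : ∀ t, Δ ≤ t → μ.real {ω | t ≤ Y ω} ≤ g t) :
    ∫ ω in {ω | Δ ≤ Y ω}, Y ω ∂μ ≤ Δ * g Δ + ∫ t in Ioi Δ, g t := by
  set A := {ω | Δ ≤ Y ω}
  have hA : MeasurableSet A := hYm measurableSet_Ici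
  set φ : ℝ → ℝ := fun t => μ.real {ω | t < A.indicator Y ω}
  have hφ_nonneg : ∀ t, 0 ≤ φ t := fun t => measureReal_nonneg
  have hφ_anti : Antitone φ := fun s t hst =>
    measureReal_mono fun ω (h : t < _) => hst.trans_lt h
  have hφ_le : ∀ t ∈ Ioc 0 Δ, φ t ≤ g Δ := by
    refine fun t ht => (measureReal_mono fun ω (h : t < _) => ?_).trans (htail Δ le_rfl)
    by_contra hω
    rw [indicator_of_notMem hω] at h
    exact ht.1.not_gt h
  have hφ_tail : ∀ t ∈ Ioi Δ, φ t ≤ g t := fun t ht =>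
    (measureReal_mono fun ω (h : t < _) =>
      (h.trans_le (indicator_le_self' (fun ω _ => hY0 ω) ω)).le).trans (htail t ht.le)
  have hφ_int_Ioc : IntegrableOn φ (Ioc 0 Δ) :=
    (hφ_anti.antitoneOn _ |>.integrableOn_isCompact isCompact_Icc).mono_set Ioc_subset_Icc_self
  have hφ_int_Ioi : IntegrableOn φ (Ioi Δ) :=
    hg.mono' hφ_anti.measurable.aestronglyMeasurable <|
      (ae_restrict_iff' measurableSet_Ioi).2 <| ae_of_all _ fun t ht => by
        rw [Real.norm_of_nonneg (hφ_nonneg t)]; exact hφ_tail t ht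
  rw [← integral_indicator hA, (hYi.indicator hA).integral_eq_integral_meas_lt
      (ae_of_all _ fun ω => indicator_nonneg (fun ω _ => hY0 ω) ω),
    ← Ioc_union_Ioi_eq_Ioi hΔ,
    setIntegral_union (Ioc_disjoint_Ioi le_rfl) measurableSet_Ioi hφ_int_Ioc hφ_int_Ioi]
  refine add_le_add ?_ (setIntegral_mono_on hφ_int_Ioi hg measurableSet_Ioi hφ_tail)
  calc ∫ t in Ioc 0 Δ, φ t ≤ ‖∫ t in Ioc 0 Δ, φ t‖ := Real.le_norm_self _
    _ ≤ g Δ * volume.real (Ioc 0 Δ) := norm_setIntegral_le_of_norm_le_const measure_Ioc_lt_top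
        fun t ht => (Real.norm_of_nonneg (hφ_nonneg t)).trans_le (hφ_le t ht)
    _ = Δ * g Δ := by rw [Real.volume_real_Ioc_of_le hΔ, sub_zero, mul_comm]

lemma setIntegral_le_of_subGaussian_tail {Y : Ω → ℝ} (hYm : Measurable Y) (hYi : Integrable Y μ)
    (hY0 : 0 ≤ Y) {K Δ : ℝ} (hK : K ≠ 0) (hΔ : 0 < Δ)
    (htail : ∀ t, 0 ≤ t → μ.real {ω | t ≤ Y ω} ≤ 2 * exp (-t ^ 2 / (2 * K ^ 2))) :
    ∫ ω in {ω | Δ ≤ Y ω}, Y ω ∂μ ≤ 2 * (Δ + K ^ 2 / Δ) * exp (-Δ ^ 2 / (2 * K ^ 2)) :=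
  calc ∫ ω in {ω | Δ ≤ Y ω}, Y ω ∂μ
      ≤ Δ * (2 * exp (-Δ ^ 2 / (2 * K ^ 2))) + ∫ t in Ioi Δ, 2 * exp (-t ^ 2 / (2 * K ^ 2)) :=
        setIntegral_le_of_tail_le hYm hYi hY0 hΔ.le
          ((integrable_exp_neg_sq_div hK).integrableOn.const_mul 2)
          fun t ht => htail t (hΔ.le.trans ht)
    _ ≤ Δ * (2 * exp (-Δ ^ 2 / (2 * K ^ 2))) + 2 * (K ^ 2 / Δ * exp (-Δ ^ 2 / (2 * K ^ 2))) := by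
        rw [integral_const_mul]
        gcongr
        exact integral_exp_neg_sq_div_Ioi_le hK hΔ
    _ = 2 * (Δ + K ^ 2 / Δ) * exp (-Δ ^ 2 / (2 * K ^ 2)) := by ring

lemma abs_setIntegral_le_setIntegral_abs_sub_add {X : Ω → ℝ} (hX : Integrable X μ) (s : Set Ω)
    (m : ℝ) : |∫ ω in s, X ω ∂μ| ≤ ∫ ω in s, |X ω - m| ∂μ + |m| * μ.real s := by
  have hdev : Integrable (fun ω => |X ω - m|) μ := (hX.sub (integrable_const m)).abs
  calc |∫ ω in s, X ω ∂μ| ≤ ∫ ω in s, |X ω| ∂μ := abs_integral_le_integral_abs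
    _ ≤ ∫ ω in s, (|X ω - m| + |m|) ∂μ :=
        integral_mono hX.abs.integrableOn (hdev.integrableOn.add (integrable_const _))
          fun ω => by linarith [abs_sub_abs_le_abs_sub (X ω) m]
    _ = ∫ ω in s, |X ω - m| ∂μ + |m| * μ.real s := by
        rw [integral_add hdev.integrableOn (integrable_const _), setIntegral_const, smul_eq_mul,
          mul_comm]

end

theorem subgaussian_truncation_error_general {Ω : Type*} [MeasureSpace Ω]
    [IsProbabilityMeasure (volume : Measure Ω)] (X : Ω → ℝ)
    (hXm : Measurable X) (hXi : Integrable X) (μ : ℝ)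
    (K : ℝ) (hK : 0 < K) (R : ℝ) (hμR : |μ| ≤ R)
    (htail : ∀ t : ℝ, 0 ≤ t →
      (volume {ω | t ≤ |X ω - μ|}).toReal ≤ 2 * Real.exp (-(t ^ 2) / (2 * K ^ 2)))
    (Δ : ℝ) (hΔ : K ≤ Δ) (L H : ℝ) (hL : L = -R - Δ) (hH : H = R + Δ) :
    |(∫ ω, X ω) -
        ∫ ω, X ω * Set.indicator {ω' | L ≤ X ω' ∧ X ω' ≤ H} (fun _ => (1 : ℝ)) ω| ≤
      4 * (2 * Δ + R) * Real.exp (-(Δ ^ 2) / (2 * K ^ 2)) := by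
  subst hL hH
  have hΔ0 : 0 < Δ := hK.trans_le hΔ
  have hR : 0 ≤ R := (abs_nonneg μ).trans hμR
  set E := exp (-(Δ ^ 2) / (2 * K ^ 2))
  have hE : 0 ≤ E := (exp_pos _).le
  set A := {ω | Δ ≤ |X ω - μ|}
  have hA : volume.real A ≤ 2 * E := htail Δ hΔ0.le
  set S := {ω' | -R - Δ ≤ X ω' ∧ X ω' ≤ R + Δ}
  have hout : Sᶜ ⊆ A := fun ω hω => le_abs_sub_of_notMem_Icc hμR hω
  have hYA : ∫ ω in A, |X ω - μ| ≤ 4 * Δ * E := by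
    have hKΔ : K ^ 2 / Δ ≤ Δ := by rw [div_le_iff₀ hΔ0]; nlinarith
    calc ∫ ω in A, |X ω - μ| ≤ 2 * (Δ + K ^ 2 / Δ) * E :=
          setIntegral_le_of_subGaussian_tail (hXm.sub measurable_const).abs
            (hXi.sub (integrable_const μ)).abs (fun ω => abs_nonneg _) hK.ne' hΔ0 htail
      _ ≤ 4 * Δ * E := by nlinarith
  have hS : MeasurableSet S := hXm measurableSet_Icc
  rw [integral_sub_integral_mul_indicator_one hXi hS]
  calc _ ≤ _ := abs_setIntegral_le_setIntegral_abs_sub_add hXi _ μ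
    _ ≤ (∫ ω in A, |X ω - μ|) + R * (2 * E) := by
        gcongr ?_ + ?_
        · exact setIntegral_mono_set (hXi.sub (integrable_const μ)).abs.integrableOn
            (ae_of_all _ fun ω => abs_nonneg _) (ae_of_all _ hout)
        · exact mul_le_mul hμR ((measureReal_mono hout).trans hA) measureReal_nonneg hR
    _ ≤ 4 * (2 * Δ + R) * E := by nlinarith [mul_nonneg hR hE, mul_nonneg hΔ0.le hE]

/-- Truncation error bound for sub-Gaussian random variables: if `X` is integrable
with mean `μ`, `|μ| ≤ R`, and `ℙ[|X − μ| ≥ t] ≤ 2 exp(−t²/(2K²))` for all `t ≥ 0`,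
then for `Δ ≥ K`, `L = −R − Δ`, `H = R + Δ`,
`|𝔼[X] − 𝔼[X · 1_{L ≤ X ≤ H}]| ≤ 4 (2Δ + R) exp(−Δ²/(2K²))`. -/
theorem subgaussian_truncation_error {Ω : Type*} [MeasureSpace Ω]
    [IsProbabilityMeasure (volume : Measure Ω)] (X : Ω → ℝ)
    (hXm : Measurable X) (hXi : Integrable X) (μ : ℝ) (hμ : μ = ∫ ω, X ω)
    (K : ℝ) (hK : 0 < K) (R : ℝ) (hR : 0 ≤ R) (hμR : |μ| ≤ R)
    (htail : ∀ t : ℝ, 0 ≤ t →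
      (volume {ω | t ≤ |X ω - μ|}).toReal ≤ 2 * Real.exp (-(t ^ 2) / (2 * K ^ 2)))
    (Δ : ℝ) (hΔ : K ≤ Δ) (L H : ℝ) (hL : L = -R - Δ) (hH : H = R + Δ) :
    |(∫ ω, X ω) -
        ∫ ω, X ω * Set.indicator {ω' | L ≤ X ω' ∧ X ω' ≤ H} (fun _ => (1 : ℝ)) ω| ≤
      4 * (2 * Δ + R) * Real.exp (-(Δ ^ 2) / (2 * K ^ 2)) :=
  subgaussian_truncation_error_general X hXm hXi μ K hK R hμR htail Δ hΔ L H hL hH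
end

section
/- Let q ∈ [0, 1] with q ≠ 1/2 and set p = q²/(2q² − 2q + 1). Then (p − √(p(1 − p)))/(2p − 1) = q. -/
/-! Writing `D = 2q² - 2q + 1 = q² + (1 - q)² > 0`, the map sends `q` to `p = q² / D`, so that `1 - p = (1 - q)² / D`
and `2p - 1 = (2q - 1) / D`. For `q ∈ [0, 1]` the square root of `p (1 - p)` is `q (1 - q) / D`,
hence `p - √(p (1 - p)) = q (2q - 1) / D`, and dividing by `2p - 1` (nonzero as `q ≠ 1/2`) gives `q`. -/

open Real

noncomputable def amplitudeMap (q : ℝ) : ℝ := q ^ 2 / (2 * q ^ 2 - 2 * q + 1)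

lemma amplitudeMap_denom_pos (q : ℝ) : 0 < 2 * q ^ 2 - 2 * q + 1 := by
  nlinarith [sq_nonneg (2 * q - 1)]

namespace amplitudeMap

lemma one_sub_eq (q : ℝ) : 1 - amplitudeMap q = (1 - q) ^ 2 / (2 * q ^ 2 - 2 * q + 1) := by
  have hD := (amplitudeMap_denom_pos q).ne'
  rw [amplitudeMap, eq_div_iff hD, sub_mul, div_mul_cancel₀ _ hD]
  ring

lemma two_mul_sub_one_eq (q : ℝ) : 2 * amplitudeMap q - 1 = (2 * q - 1) / (2 * q ^ 2 - 2 * q + 1) := by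
  have hD := (amplitudeMap_denom_pos q).ne'
  rw [amplitudeMap, eq_div_iff hD, sub_mul, mul_assoc, div_mul_cancel₀ _ hD]
  ring

lemma sqrt_mul_one_sub_eq {q : ℝ} (hq : q ∈ Set.Icc (0 : ℝ) 1) :
    √(amplitudeMap q * (1 - amplitudeMap q)) = q * (1 - q) / (2 * q ^ 2 - 2 * q + 1) := by
  have hsq : amplitudeMap q * (1 - amplitudeMap q) = (q * (1 - q) / (2 * q ^ 2 - 2 * q + 1)) ^ 2 := by
    rw [one_sub_eq, amplitudeMap, div_mul_div_comm, div_pow, mul_pow, sq (2 * q ^ 2 - 2 * q + 1)]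
  rw [hsq, sqrt_sq]
  exact div_nonneg (mul_nonneg hq.1 (sub_nonneg.2 hq.2)) (amplitudeMap_denom_pos q).le

end amplitudeMap

/-- Inversion identity for the amplitude map: for `q ∈ [0,1]`, `q ≠ 1/2`, and
`p = q²/(2q² − 2q + 1)`, one has `(p − √(p(1 − p)))/(2p − 1) = q`. -/
theorem amplitude_map_inversion (q : ℝ) (hq : q ∈ Set.Icc (0 : ℝ) 1)
    (hq2 : q ≠ 1 / 2) (p : ℝ) (hp : p = q ^ 2 / (2 * q ^ 2 - 2 * q + 1)) :
    (p - Real.sqrt (p * (1 - p))) / (2 * p - 1) = q := by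
  replace hp : p = amplitudeMap q := hp
  subst hp
  have hD := (amplitudeMap_denom_pos q).ne'
  have h2q : 2 * q - 1 ≠ 0 := fun h => hq2 (by linarith)
  rw [amplitudeMap.sqrt_mul_one_sub_eq hq, amplitudeMap.two_mul_sub_one_eq, amplitudeMap, ← sub_div,
    div_div_div_cancel_right₀ hD, show q ^ 2 - q * (1 - q) = q * (2 * q - 1) by ring,
    mul_div_cancel_right₀ q h2q]
end

section
/- Let E be a complex inner product space, let v, w ∈ E be orthonormal unit vectors, let ε ∈ [0, 1], and set u = √(1 − ε) • v + √ε • w (which is a unit vector). Then ‖P_u − P_v‖ ≤ 2ε + 2√(ε(1 − ε)). -/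
open scoped InnerProductSpace

/-- If `v, w` are orthonormal unit vectors, `ε ∈ [0,1]`, and
`u = √(1−ε) • v + √ε • w`, then the rank-one projections `P_u : x ↦ ⟪u, x⟫ • u`
and `P_v` satisfy `‖P_u − P_v‖ ≤ 2ε + 2√(ε(1−ε))` in operator norm. -/
theorem perturbed_projection_diff_bound {E : Type*} [NormedAddCommGroup E]
    [InnerProductSpace ℂ E] (v w : E) (hv : ‖v‖ = 1) (hw : ‖w‖ = 1)
    (hvw : ⟪v, w⟫_ℂ = 0) (ε : ℝ) (hε : ε ∈ Set.Icc (0 : ℝ) 1) (u : E)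
    (hu : u = (Real.sqrt (1 - ε) : ℂ) • v + (Real.sqrt ε : ℂ) • w) :
    ‖(innerSL ℂ u).smulRight u - (innerSL ℂ v).smulRight v‖ ≤
      2 * ε + 2 * Real.sqrt (ε * (1 - ε)) := by
  obtain ⟨hε0, hε1⟩ := hε
  set a := Real.sqrt (1 - ε) with ha
  set b := Real.sqrt ε with hb
  have ha0 : 0 ≤ a := Real.sqrt_nonneg _
  have hb0 : 0 ≤ b := Real.sqrt_nonneg _
  have ha2 : a * a = 1 - ε := Real.mul_self_sqrt (by linarith)
  have hb2 : b * b = ε := Real.mul_self_sqrt hε0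
  have hab : a * b = Real.sqrt (ε * (1 - ε)) := by
    rw [mul_comm ε, Real.sqrt_mul (by linarith : (0:ℝ) ≤ 1 - ε)]
  apply ContinuousLinearMap.opNorm_le_bound
  · positivity
  intro x
  have hexp : ((innerSL ℂ u).smulRight u - (innerSL ℂ v).smulRight v) x
      = ((a * a - 1 : ℝ) : ℂ) • (⟪v, x⟫_ℂ • v) + ((a * b : ℝ) : ℂ) • (⟪w, x⟫_ℂ • v)
        + (((a * b : ℝ) : ℂ) • (⟪v, x⟫_ℂ • w) + ((b * b : ℝ) : ℂ) • (⟪w, x⟫_ℂ • w)) := by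
    simp only [ContinuousLinearMap.sub_apply, ContinuousLinearMap.smulRight_apply,
      innerSL_apply_apply, hu, inner_add_left, inner_smul_left, Complex.conj_ofReal,
      smul_add, smul_smul, add_smul, sub_smul, one_smul]
    push_cast
    module
  have key : ∀ (c : ℝ) (y z : E), ‖y‖ = 1 → ‖z‖ = 1 → 0 ≤ c →
      ‖((c : ℝ) : ℂ) • (⟪y, x⟫_ℂ • z)‖ ≤ c * ‖x‖ := by
    intro c y z hy hz hc
    rw [norm_smul, norm_smul, hz, mul_one, Complex.norm_real, Real.norm_of_nonneg hc]
    exact mul_le_mul_of_nonneg_left (by simpa [hy] using norm_inner_le_norm (𝕜 := ℂ) y x) hc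
  have h1 : ‖((a * a - 1 : ℝ) : ℂ) • (⟪v, x⟫_ℂ • v)‖ ≤ ε * ‖x‖ := by
    have : a * a - 1 = -ε := by linarith
    rw [this]
    simpa using key ε v v hv hv hε0
  have h2 := key (a * b) w v hw hv (mul_nonneg ha0 hb0)
  have h3 := key (a * b) v w hv hw (mul_nonneg ha0 hb0)
  have h4 : ‖((b * b : ℝ) : ℂ) • (⟪w, x⟫_ℂ • w)‖ ≤ ε * ‖x‖ := by
    rw [hb2] at *
    exact key ε w w hw hw hε0
  calc ‖((innerSL ℂ u).smulRight u - (innerSL ℂ v).smulRight v) x‖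
      ≤ ‖((a * a - 1 : ℝ) : ℂ) • (⟪v, x⟫_ℂ • v)‖ + ‖((a * b : ℝ) : ℂ) • (⟪w, x⟫_ℂ • v)‖
        + (‖((a * b : ℝ) : ℂ) • (⟪v, x⟫_ℂ • w)‖ + ‖((b * b : ℝ) : ℂ) • (⟪w, x⟫_ℂ • w)‖) := by
        rw [hexp]
        exact (norm_add_le _ _).trans (add_le_add (norm_add_le _ _) (norm_add_le _ _))
    _ ≤ ε * ‖x‖ + (a * b) * ‖x‖ + ((a * b) * ‖x‖ + ε * ‖x‖) := by
        exact add_le_add (add_le_add h1 h2) (add_le_add h3 h4)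
    _ = (2 * ε + 2 * Real.sqrt (ε * (1 - ε))) * ‖x‖ := by rw [← hab]; ring
end
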